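/- Let G be a finite connected simple graph that is trivially perfect (no induced P4 and no induced C4). Then α'(G) = θ_e(G). -/

import Mathlib

namespace ECG

/-- The edge-clique graph `K_e(G)`: its vertices are the edges of `G`, and two distinct
edges are adjacent exactly when all their endpoints are pairwise adjacent in `G`
(i.e. the two edges lie in a common clique of `G`). -/
def edgeCliqueGraph {V : Type*} (G : SimpleGraph V) : SimpleGraph G.edgeSet where
  Adj e f := e ≠ f ∧ G.IsClique {v | v ∈ (e : Sym2 V) ∨ v ∈ (f : Sym2 V)}
  symm := by
    refine ⟨?_⟩; rintro e f ⟨hne, hcl⟩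
    refine ⟨hne.symm, ?_⟩
    have h : {v | v ∈ (f : Sym2 V) ∨ v ∈ (e : Sym2 V)} =
        {v | v ∈ (e : Sym2 V) ∨ v ∈ (f : Sym2 V)} := by
      ext v; exact or_comm
    rw [h]; exact hcl
  loopless := ⟨fun e h => h.1 rfl⟩

/-- A set of vertices is independent when no two of its members are adjacent. -/
def IsIndepSet {V : Type*} (G : SimpleGraph V) (S : Set V) : Prop :=
  S.Pairwise fun a b => ¬ G.Adj a b

/-- The independence number `α(G)`: the maximum cardinality of an independent set. -/
noncomputable def indepNum {V : Type*} (G : SimpleGraph V) : ℕ :=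
  sSup {n | ∃ S : Finset V, IsIndepSet G ↑S ∧ S.card = n}

end ECG

namespace ECG

/-- The edge-clique cover number `θ_e(G)`: the minimum cardinality of a family of cliques
of `G` such that every edge of `G` has both of its endpoints in some member of the family. -/
noncomputable def edgeCliqueCoverNum {V : Type*} (G : SimpleGraph V) : ℕ :=
  sInf {n | ∃ F : Finset (Set V), F.card = n ∧ (∀ C ∈ F, G.IsClique C) ∧
    ∀ e ∈ G.edgeSet, ∃ C ∈ F, ∀ v ∈ e, v ∈ C}

end ECG

/-!
In a trivially perfect graph the closed neighbourhoods `N[x]`, `N[y]` of adjacent vertices are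
nested: a neighbour of `x` outside `N[y]` and a neighbour of `y` outside `N[x]` would span an
induced `P₄` or `C₄`. Hence a vertex `l` of a maximal clique `M` whose closed neighbourhood is
inclusion-minimal among those of `M` satisfies `N[l] = M`. Picking an edge at such an `l` for every
maximal clique with an edge gives edges no two of which lie in a common clique (such a clique
would put `l'` in `N[l]`, forcing `N[l] = N[l']`), while these maximal cliques cover all edges.
So `θ_e(G) ≤ #{maximal cliques with an edge} ≤ α'(G) ≤ θ_e(G)`.
-/

namespace SimpleGraph

variable {V : Type*} {G : SimpleGraph V}

lemma nonempty_pathGraph_four_embedding {a x y b : V} (hax : G.Adj a x) (hxy : G.Adj x y)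
    (hyb : G.Adj y b) (hay : ¬ G.Adj a y) (hxb : ¬ G.Adj x b) (hab : ¬ G.Adj a b) :
    Nonempty (pathGraph 4 ↪g G) := by
  have := hax.ne; have := hxy.ne; have := hyb.ne
  have : a ≠ y := by rintro rfl; exact hab hyb
  have : x ≠ b := by rintro rfl; exact hab hax
  have : a ≠ b := by rintro rfl; exact hay hyb.symm
  have hinj : Function.Injective ![a, x, y, b] := by
    intro u v; fin_cases u <;> fin_cases v <;> simp_all [eq_comm]
  refine ⟨⟨⟨_, hinj⟩, fun {u v} => ?_⟩⟩
  change G.Adj (![a, x, y, b] u) (![a, x, y, b] v) ↔ _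
  fin_cases u <;> fin_cases v <;> simp_all [pathGraph_adj, adj_comm]

lemma nonempty_cycleGraph_four_embedding {a x y b : V} (hax : G.Adj a x) (hxy : G.Adj x y)
    (hyb : G.Adj y b) (hba : G.Adj b a) (hay : ¬ G.Adj a y) (hxb : ¬ G.Adj x b)
    (hya : y ≠ a) (hbx : b ≠ x) : Nonempty (cycleGraph 4 ↪g G) := by
  have := hax.ne; have := hxy.ne; have := hyb.ne; have := hba.ne
  have hinj : Function.Injective ![a, x, y, b] := by
    intro u v; fin_cases u <;> fin_cases v <;> simp_all [eq_comm]
  refine ⟨⟨⟨_, hinj⟩, fun {u v} => ?_⟩⟩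
  change G.Adj (![a, x, y, b] u) (![a, x, y, b] v) ↔ _
  fin_cases u <;> fin_cases v <;> simp_all [cycleGraph_adj, adj_comm] <;> decide

def closedNeighborSet (G : SimpleGraph V) (v : V) : Set V := insert v (G.neighborSet v)

@[simp]
lemma mem_closedNeighborSet {v w : V} : w ∈ G.closedNeighborSet v ↔ w = v ∨ G.Adj v w :=
  Iff.rfl

lemma self_mem_closedNeighborSet (v : V) : v ∈ G.closedNeighborSet v := Or.inl rfl

lemma IsClique.subset_closedNeighborSet {K : Set V} {v : V} (hK : G.IsClique K) (hv : v ∈ K) :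
    K ⊆ G.closedNeighborSet v := fun w hw =>
  (eq_or_ne w v).imp_right fun hwv => hK hv hw hwv.symm

lemma closedNeighborSet_eq_of_isClique {v w : V} (hv : G.IsClique (G.closedNeighborSet v))
    (hw : G.IsClique (G.closedNeighborSet w)) (hwv : w ∈ G.closedNeighborSet v) :
    G.closedNeighborSet v = G.closedNeighborSet w := by
  have hvw : v ∈ G.closedNeighborSet w :=
    hv.subset_closedNeighborSet hwv (self_mem_closedNeighborSet v)
  exact (hv.subset_closedNeighborSet hwv).antisymm (hw.subset_closedNeighborSet hvw)

lemma closedNeighborSet_subset_or_subset (hP4 : IsEmpty (pathGraph 4 ↪g G))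
    (hC4 : IsEmpty (cycleGraph 4 ↪g G)) {x y : V} (hxy : G.Adj x y) :
    G.closedNeighborSet x ⊆ G.closedNeighborSet y ∨
      G.closedNeighborSet y ⊆ G.closedNeighborSet x := by
  by_contra h
  simp only [not_or, Set.not_subset] at h
  obtain ⟨⟨a, hax, hay⟩, ⟨b, hby, hbx⟩⟩ := h
  simp only [mem_closedNeighborSet, not_or] at hax hay hby hbx
  rcases hax with rfl | hxa
  · exact hay.2 hxy.symm
  rcases hby with rfl | hyb
  · exact hbx.2 hxy
  by_cases hab : G.Adj a b
  · exact hC4.elim (nonempty_cycleGraph_four_embedding hxa.symm hxy hyb hab.symm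
      (fun h => hay.2 h.symm) hbx.2 (Ne.symm hay.1) hbx.1).some
  · exact hP4.elim (nonempty_pathGraph_four_embedding hxa.symm hxy hyb
      (fun h => hay.2 h.symm) hbx.2 hab).some

lemma exists_closedNeighborSet_eq_of_maximal_isClique [Finite V]
    (hP4 : IsEmpty (pathGraph 4 ↪g G)) (hC4 : IsEmpty (cycleGraph 4 ↪g G)) {M : Set V}
    (hM : Maximal G.IsClique M) (hne : M.Nonempty) : ∃ l, G.closedNeighborSet l = M := by
  obtain ⟨l, hlM, hmin⟩ := M.toFinite.exists_minimalFor G.closedNeighborSet M hne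
  refine ⟨l, subset_antisymm (fun w hw => ?_) (hM.1.subset_closedNeighborSet hlM)⟩
  by_contra hwM
  obtain ⟨m, hmM, hwm, hnadj⟩ : ∃ m ∈ M, w ≠ m ∧ ¬ G.Adj w m := by
    simpa [isClique_insert, hM.1] using fun h => hwM (hM.mem_of_prop_insert h)
  have hlm : G.closedNeighborSet l ⊆ G.closedNeighborSet m := by
    rcases eq_or_ne l m with rfl | hlm
    · rfl
    rcases closedNeighborSet_subset_or_subset hP4 hC4 (hM.1 hlM hmM hlm) with h | h
    exacts [h, hmin hmM h]
  rcases hlm hw with rfl | h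
  exacts [hwm rfl, hnadj h.symm]

noncomputable def nontrivialMaximalCliques [Finite V] (G : SimpleGraph V) : Finset (Set V) :=
  (Set.toFinite {M : Set V | Maximal G.IsClique M ∧ M.Nontrivial}).toFinset

lemma mem_nontrivialMaximalCliques [Finite V] {M : Set V} :
    M ∈ G.nontrivialMaximalCliques ↔ Maximal G.IsClique M ∧ M.Nontrivial := by
  simp [nontrivialMaximalCliques]

end SimpleGraph

namespace ECG

open SimpleGraph

variable {V : Type*} {G : SimpleGraph V}

lemma IsIndepSet.card_le_indepNum {α : Type*} [Finite α] {H : SimpleGraph α} {S : Finset α}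
    (hS : IsIndepSet H S) : S.card ≤ indepNum H := by
  have := Fintype.ofFinite α
  refine le_csSup ⟨Fintype.card α, ?_⟩ ⟨S, hS, rfl⟩
  rintro n ⟨T, -, rfl⟩
  exact T.card_le_univ

def IsEdgeCliqueCover (G : SimpleGraph V) (F : Finset (Set V)) : Prop :=
  (∀ C ∈ F, G.IsClique C) ∧ ∀ e ∈ G.edgeSet, ∃ C ∈ F, ∀ v ∈ e, v ∈ C

lemma edgeCliqueCoverNum_le_card {F : Finset (Set V)} (hF : IsEdgeCliqueCover G F) :
    edgeCliqueCoverNum G ≤ F.card :=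
  Nat.sInf_le ⟨F, rfl, hF⟩

lemma isEdgeCliqueCover_nontrivialMaximalCliques [Finite V] :
    IsEdgeCliqueCover G G.nontrivialMaximalCliques := by
  refine ⟨fun C hC => (mem_nontrivialMaximalCliques.1 hC).1.1, fun e he => ?_⟩
  induction e using Sym2.ind with
  | _ a b =>
  obtain ⟨M, hsub, hM⟩ :=
    Finite.exists_le_maximal (p := G.IsClique) (isClique_pair.2 fun _ => he)
  refine ⟨M, mem_nontrivialMaximalCliques.2 ⟨hM, ?_⟩, fun v hv => ?_⟩
  · exact ⟨a, hsub (by simp), b, hsub (by simp), he.ne⟩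
  · rcases Sym2.mem_iff.1 hv with rfl | rfl <;> exact hsub (by simp)

/-- Two distinct edges of an independent set of `K_e(G)` never lie in the same clique, so
assigning to each a covering clique is injective. -/
lemma card_le_card_of_isIndepSet_of_isEdgeCliqueCover {S : Finset G.edgeSet}
    {F : Finset (Set V)} (hS : IsIndepSet (edgeCliqueGraph G) S) (hF : IsEdgeCliqueCover G F) :
    S.card ≤ F.card := by
  choose C hCF hCe using fun e : G.edgeSet => hF.2 e e.2
  refine Finset.card_le_card_of_injOn C (fun e _ => hCF e) fun e he f hf hef => ?_
  by_contra hne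
  refine hS he hf hne ⟨hne, (hF.1 _ (hCF e)).subset ?_⟩
  rintro v (hv | hv)
  · exact hCe e v hv
  · exact hef ▸ hCe f v hv

lemma exists_isEdgeCliqueCover_card_eq [Finite V] :
    ∃ F : Finset (Set V), F.card = edgeCliqueCoverNum G ∧ IsEdgeCliqueCover G F := by
  have hne : {n | ∃ F : Finset (Set V), F.card = n ∧ IsEdgeCliqueCover G F}.Nonempty :=
    ⟨_, _, rfl, isEdgeCliqueCover_nontrivialMaximalCliques⟩
  exact Nat.sInf_mem hne

lemma indepNum_edgeCliqueGraph_le_edgeCliqueCoverNum [Finite V] :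
    indepNum (edgeCliqueGraph G) ≤ edgeCliqueCoverNum G := by
  obtain ⟨F, hFcard, hF⟩ := exists_isEdgeCliqueCover_card_eq (G := G)
  refine csSup_le ⟨0, ∅, by simp [IsIndepSet], rfl⟩ ?_
  rintro n ⟨S, hS, rfl⟩
  exact (card_le_card_of_isIndepSet_of_isEdgeCliqueCover hS hF).trans hFcard.le

lemma card_le_indepNum_edgeCliqueGraph [Finite V] {F : Finset (Set V)}
    (hF : ∀ M ∈ F, G.IsClique M ∧ M.Nontrivial ∧ ∃ l, G.closedNeighborSet l = M) :
    F.card ≤ indepNum (edgeCliqueGraph G) := by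
  classical
  have hlw (M : F) : ∃ l w, G.closedNeighborSet l = M ∧ G.Adj l w := by
    obtain ⟨-, hnt, l, hl⟩ := hF M M.2
    obtain ⟨w, hw, hwl⟩ := hnt.exists_ne l
    exact ⟨l, w, hl, ((hl ▸ hw : w ∈ G.closedNeighborSet l)).resolve_left hwl⟩
  choose l w hl hlw using hlw
  have hcl (M : F) : G.IsClique (G.closedNeighborSet (l M)) := by
    rw [hl M]; exact (hF M M.2).1
  let e (M : F) : G.edgeSet := ⟨s(l M, w M), hlw M⟩
  have eq_of_mem (M M' : F) (h : l M' ∈ G.closedNeighborSet (l M)) : M = M' :=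
    Subtype.ext <| (hl M).symm.trans <|
      (closedNeighborSet_eq_of_isClique (hcl M) (hcl M') h).trans (hl M')
  have eq_of_isClique (M M' : F)
      (h : G.IsClique {v | v ∈ (e M : Sym2 V) ∨ v ∈ (e M' : Sym2 V)}) : M = M' :=
    eq_of_mem M M' <| h.subset_closedNeighborSet (Or.inl (Sym2.mem_mk_left _ _))
      (Or.inr (Sym2.mem_mk_left _ _))
  have he : Function.Injective e := fun M M' h => eq_of_mem M M' <| by
    have : l M' ∈ (e M : Sym2 V) := by rw [h]; exact Sym2.mem_mk_left _ _
    rcases Sym2.mem_iff.1 this with h | h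
    exacts [Or.inl h, Or.inr (h ▸ hlw M)]
  calc F.card = (F.attach.image e).card := by
        rw [Finset.card_image_of_injective _ he, Finset.card_attach]
    _ ≤ _ := IsIndepSet.card_le_indepNum ?_
  simp only [Finset.coe_image, Finset.coe_attach, Set.image_univ]
  rintro _ ⟨M, rfl⟩ _ ⟨M', rfl⟩ hne ⟨-, h⟩
  exact hne (congrArg e (eq_of_isClique M M' h))

end ECG

theorem alpha'_eq_edgeCliqueCoverNum_of_triviallyPerfect_general {V : Type*} [Fintype V]
    (G : SimpleGraph V)
    (hP4 : IsEmpty (SimpleGraph.pathGraph 4 ↪g G))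
    (hC4 : IsEmpty (SimpleGraph.cycleGraph 4 ↪g G)) :
    ECG.indepNum (ECG.edgeCliqueGraph G) = ECG.edgeCliqueCoverNum G := by
  refine ECG.indepNum_edgeCliqueGraph_le_edgeCliqueCoverNum.antisymm ?_
  calc ECG.edgeCliqueCoverNum G ≤ G.nontrivialMaximalCliques.card :=
        ECG.edgeCliqueCoverNum_le_card ECG.isEdgeCliqueCover_nontrivialMaximalCliques
    _ ≤ _ := ECG.card_le_indepNum_edgeCliqueGraph fun M hM => by
        obtain ⟨hmax, hnt⟩ := SimpleGraph.mem_nontrivialMaximalCliques.1 hM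
        exact ⟨hmax.1, hnt, SimpleGraph.exists_closedNeighborSet_eq_of_maximal_isClique
          hP4 hC4 hmax hnt.nonempty⟩

/-- For a finite connected trivially perfect graph `G` (no induced `P₄`
and no induced `C₄`), `α'(G) = θ_e(G)`. -/
theorem alpha'_eq_edgeCliqueCoverNum_of_triviallyPerfect {V : Type*} [Fintype V]
    (G : SimpleGraph V) (hconn : G.Connected)
    (hP4 : IsEmpty (SimpleGraph.pathGraph 4 ↪g G))
    (hC4 : IsEmpty (SimpleGraph.cycleGraph 4 ↪g G)) :
    ECG.indepNum (ECG.edgeCliqueGraph G) = ECG.edgeCliqueCoverNum G :=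
  alpha'_eq_edgeCliqueCoverNum_of_triviallyPerfect_general G hP4 hC4
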